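/- arXiv:1909.04896 — 6 statements merged into one kernel-verified Lean document; each statement's English description precedes it below -/
import Mathlib

section
/- Let (X, 𝒜, μ) be a probability space whose σ-algebra 𝒜 is countably generated, and let ℙ be a partition of X into measurable sets. If {μ_P : P ∈ ℙ} and {μ'_P : P ∈ ℙ} are both disintegrations of μ with respect to ℙ, then μ_P = μ'_P for μ̂-almost every P ∈ ℙ. -/
open MeasureTheory Filter Set Topology

namespace ErgodicDecomposition

variable {X : Type*}

/-- `ℙ` is a partition of `X`: every point lies in exactly one element of `ℙ`. -/
def IsPartition (ℙ : Set (Set X)) : Prop := ∀ x : X, ∃! P, P ∈ ℙ ∧ x ∈ P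

open Classical in
/-- The element of `ℙ` containing `x` (with junk value `∅` if there is none);
this is the canonical projection `τ̂ : X → ℙ`. -/
noncomputable def partOf (ℙ : Set (Set X)) (x : X) : Set X :=
  if h : ∃ P, P ∈ ℙ ∧ x ∈ P then h.choose else ∅

/-- `ν` is a disintegration of `μ` with respect to the partition `ℙ`.  All statements about
the quotient space `ℙ` (its σ-algebra, the quotient measure `μ̂`, measurability of
`P ↦ μ_P(E)` and integration against `μ̂`) are expressed, equivalently, after pulling back
along the canonical projection `x ↦ partOf ℙ x`, since the σ-algebra of `ℙ` is by definition
the pushforward σ-algebra and `μ̂` is the pushforward measure. -/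
def IsDisintegration [MeasurableSpace X] (μ : Measure X) (ℙ : Set (Set X))
    (ν : Set X → Measure X) : Prop :=
  (∀ P ∈ ℙ, IsProbabilityMeasure (ν P)) ∧
  (∀ᵐ x ∂μ, ν (partOf ℙ x) (partOf ℙ x) = 1) ∧
  (∀ E : Set X, MeasurableSet E →
    Measurable (fun x => ν (partOf ℙ x) E) ∧ μ E = ∫⁻ x, ν (partOf ℙ x) E ∂μ)

/-- `ℙ` is a measurable partition for `μ`: a partition of `X` into measurable sets such that
there are a full measure set `X₀` and a refining sequence of countable partitions `Ps n` into
measurable sets with `P(x) = ⋂ n, P_n(x)` for every `x ∈ X₀`. -/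
def IsMeasurablePartition [MeasurableSpace X] (μ : Measure X) (ℙ : Set (Set X)) : Prop :=
  IsPartition ℙ ∧ (∀ P ∈ ℙ, MeasurableSet P) ∧
  ∃ X₀ : Set X, MeasurableSet X₀ ∧ μ X₀ = 1 ∧
  ∃ Ps : ℕ → Set (Set X),
    (∀ n, (Ps n).Countable) ∧
    (∀ n, IsPartition (Ps n)) ∧
    (∀ n, ∀ P ∈ Ps n, MeasurableSet P) ∧
    (∀ n, ∀ B ∈ Ps (n + 1), ∃ A ∈ Ps n, B ⊆ A) ∧
    (∀ x ∈ X₀, partOf ℙ x = ⋂ n, partOf (Ps n) x)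

open Classical in
/-- `τ(x, A)`: the lim-inf of the asymptotic frequency of visits of the orbit of `x` to `A`. -/
noncomputable def visitFreq (f : X → X) (A : Set X) (x : X) : ℝ :=
  atTop.liminf fun n : ℕ =>
    (((Finset.range n).filter fun i => f^[i] x ∈ A).card : ℝ) / n

/-- The equivalence class of `x` for the relation `x ∼ y ↔ τ(x,A) = τ(y,A)` for all `A ∈ 𝒜₀`. -/
def dynClass (f : X → X) (𝒜₀ : Set (Set X)) (x : X) : Set X :=
  {y | ∀ A ∈ 𝒜₀, visitFreq f A y = visitFreq f A x}

/-- The dynamical partition of `X` with respect to `f` and the countable algebra `𝒜₀`. -/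
def dynPartition (f : X → X) (𝒜₀ : Set (Set X)) : Set (Set X) :=
  {P | ∃ x : X, P = dynClass f 𝒜₀ x}


/-!
Both disintegrations reproduce `μ` on sets of the form `E ∩ S` with `S` measurable and
saturated for `ℙ`: since `μ_P` is concentrated on `P`, which lies inside or outside `S`, one gets
`μ (E ∩ S) = ∫_S μ_P(E)`. The maps `x ↦ μ_{P(x)}(E)` and `x ↦ μ'_{P(x)}(E)` are measurable for
the σ-algebra of saturated sets and have the same integrals over all its sets, so they agree
almost everywhere. Letting `E` range over a countable generating π-system gives `μ_P = μ'_P`.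
-/

open scoped ENNReal

lemma partOf_mem {ℙ : Set (Set X)} (hpart : IsPartition ℙ) (x : X) : partOf ℙ x ∈ ℙ := by
  have h : ∃ P, P ∈ ℙ ∧ x ∈ P := (hpart x).exists
  rw [partOf, dif_pos h]
  exact h.choose_spec.1

lemma mem_partOf {ℙ : Set (Set X)} (hpart : IsPartition ℙ) (x : X) : x ∈ partOf ℙ x := by
  have h : ∃ P, P ∈ ℙ ∧ x ∈ P := (hpart x).exists
  rw [partOf, dif_pos h]
  exact h.choose_spec.2

lemma partOf_eq_of_mem {ℙ : Set (Set X)} (hpart : IsPartition ℙ) {x y : X}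
    (hy : y ∈ partOf ℙ x) : partOf ℙ y = partOf ℙ x :=
  (hpart y).unique ⟨partOf_mem hpart y, mem_partOf hpart y⟩ ⟨partOf_mem hpart x, hy⟩

lemma partOf_subset_preimage {ℙ : Set (Set X)} (hpart : IsPartition ℙ) {T : Set (Set X)}
    {x : X} (hx : partOf ℙ x ∈ T) : partOf ℙ x ⊆ partOf ℙ ⁻¹' T := fun _ hy => by
  rwa [mem_preimage, partOf_eq_of_mem hpart hy]

lemma measure_inter_eq_of_subset_of_measure_eq_one {α : Type*} [MeasurableSpace α]
    {ρ : Measure α} [IsProbabilityMeasure ρ] {P Q : Set α} (hQ : MeasurableSet Q)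
    (hPQ : P ⊆ Q) (hP : ρ P = 1) (E : Set α) : ρ (E ∩ Q) = ρ E := by
  have hQ_one : ρ Q = 1 := le_antisymm prob_le_one (hP ▸ measure_mono hPQ)
  exact measure_inter_conull ((prob_compl_eq_zero_iff hQ).2 hQ_one)

lemma measure_inter_eq_zero_of_subset_compl_of_measure_eq_one {α : Type*} [MeasurableSpace α]
    {ρ : Measure α} [IsProbabilityMeasure ρ] {P Q : Set α} (hQ : MeasurableSet Q)
    (hPQ : P ⊆ Qᶜ) (hP : ρ P = 1) (E : Set α) : ρ (E ∩ Q) = 0 := by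
  have hQc_one : ρ Qᶜ = 1 := le_antisymm prob_le_one (hP ▸ measure_mono hPQ)
  exact measure_mono_null inter_subset_right ((prob_compl_eq_one_iff hQ).1 hQc_one)

lemma countable_generatePiSystem {α : Type*} {S : Set (Set α)} (hS : S.Countable) :
    (generatePiSystem S).Countable := by
  have hsub : generatePiSystem S ⊆ sInter '' {t : Set (Set α) | t.Finite ∧ t ⊆ S} := by
    intro s hs
    induction hs with
    | base h => exact ⟨{_}, ⟨finite_singleton _, singleton_subset_iff.2 h⟩, sInter_singleton _⟩
    | inter _ _ _ ih₁ ih₂ =>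
      obtain ⟨T₁, ⟨hT₁f, hT₁S⟩, rfl⟩ := ih₁
      obtain ⟨T₂, ⟨hT₂f, hT₂S⟩, rfl⟩ := ih₂
      exact ⟨T₁ ∪ T₂, ⟨hT₁f.union hT₂f, union_subset hT₁S hT₂S⟩, sInter_union _ _⟩
  exact ((countable_ofPred_finite_subset hS).image _).mono hsub

lemma ae_eq_of_forall_ae_apply_eq {α β : Type*} [MeasurableSpace α] [MeasurableSpace β]
    [MeasurableSpace.CountablyGenerated β] {μ : Measure α} {κ η : α → Measure β}
    [∀ a, IsFiniteMeasure (κ a)] (h : ∀ s, MeasurableSet s → ∀ᵐ a ∂μ, κ a s = η a s) :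
    ∀ᵐ a ∂μ, κ a = η a := by
  set C := generatePiSystem (MeasurableSpace.countableGeneratingSet β)
  have hC_gen : MeasurableSpace.generateFrom C = ‹MeasurableSpace β› := by
    rw [generateFrom_generatePiSystem_eq, MeasurableSpace.generateFrom_countableGeneratingSet]
  have hC_meas : ∀ s ∈ C, MeasurableSet s := fun s hs =>
    hC_gen ▸ MeasurableSpace.measurableSet_generateFrom hs
  have hC_ae : ∀ᵐ a ∂μ, ∀ s ∈ C, κ a s = η a s :=
    (ae_ball_iff (countable_generatePiSystem
      MeasurableSpace.countable_countableGeneratingSet)).2 fun s hs => h s (hC_meas s hs)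
  filter_upwards [hC_ae, h univ MeasurableSet.univ] with a hC huniv
  exact ext_of_generate_finite C hC_gen.symm (isPiSystem_generatePiSystem _) hC huniv

lemma ae_eq_of_forall_setLIntegral_eq_of_sigmaFinite' {α : Type*} {m m0 : MeasurableSpace α}
    (hm : m ≤ m0) {μ : Measure α} [SigmaFinite (μ.trim hm)] {f g : α → ℝ≥0∞}
    (hf : Measurable[m] f) (hg : Measurable[m] g)
    (h : ∀ s, MeasurableSet[m] s → ∫⁻ x in s, f x ∂μ = ∫⁻ x in s, g x ∂μ) : f =ᵐ[μ] g := by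
  refine ae_eq_of_ae_eq_trim (hm := hm) <|
    ae_eq_of_forall_setLIntegral_eq_of_sigmaFinite hf hg fun s hs _ => ?_
  rw [setLIntegral_trim hm hf hs, setLIntegral_trim hm hg hs]
  exact h s hs

namespace IsDisintegration

variable [mX : MeasurableSpace X] {μ : Measure X} {ℙ : Set (Set X)} {ν ν' : Set X → Measure X}

lemma isProbabilityMeasure (hpart : IsPartition ℙ) (hν : IsDisintegration μ ℙ ν) (x : X) :
    IsProbabilityMeasure (ν (partOf ℙ x)) :=
  hν.1 _ (partOf_mem hpart x)

lemma measure_inter_preimage_partOf (hpart : IsPartition ℙ) (hν : IsDisintegration μ ℙ ν)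
    {E : Set X} (hE : MeasurableSet E) {T : Set (Set X)}
    (hT : MeasurableSet (partOf ℙ ⁻¹' T)) :
    μ (E ∩ partOf ℙ ⁻¹' T) = ∫⁻ x in partOf ℙ ⁻¹' T, ν (partOf ℙ x) E ∂μ := by
  rw [(hν.2.2 _ (hE.inter hT)).2, ← lintegral_indicator hT]
  refine lintegral_congr_ae ?_
  filter_upwards [hν.2.1] with x hx
  have := hν.isProbabilityMeasure hpart x
  by_cases hxT : partOf ℙ x ∈ T
  · rw [indicator_of_mem (show x ∈ partOf ℙ ⁻¹' T from hxT)]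
    exact measure_inter_eq_of_subset_of_measure_eq_one hT (partOf_subset_preimage hpart hxT) hx E
  · rw [indicator_of_notMem (show x ∉ partOf ℙ ⁻¹' T from hxT)]
    exact measure_inter_eq_zero_of_subset_compl_of_measure_eq_one hT
      (partOf_subset_preimage (T := Tᶜ) hpart hxT) hx E

lemma ae_apply_eq [IsFiniteMeasure μ] (hpart : IsPartition ℙ) (hν : IsDisintegration μ ℙ ν)
    (hν' : IsDisintegration μ ℙ ν') {E : Set X} (hE : MeasurableSet E) :
    ∀ᵐ x ∂μ, ν (partOf ℙ x) E = ν' (partOf ℙ x) E := by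
  -- The pull-back of the quotient σ-algebra of `ℙ`: the measurable sets saturated for `ℙ`.
  have measurable_apply : ∀ κ, IsDisintegration μ ℙ κ →
      Measurable[.comap (partOf ℙ) (.map (partOf ℙ) mX)] fun x => κ (partOf ℙ x) E :=
    fun κ hκ s hs => ⟨(fun P => κ P E) ⁻¹' s, (hκ.2.2 E hE).1 hs, rfl⟩
  refine ae_eq_of_forall_setLIntegral_eq_of_sigmaFinite' MeasurableSpace.comap_map_le
    (measurable_apply ν hν) (measurable_apply ν' hν') ?_
  rintro _ ⟨T, hT, rfl⟩
  rw [← hν.measure_inter_preimage_partOf hpart hE hT,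
    ← hν'.measure_inter_preimage_partOf hpart hE hT]

end IsDisintegration

theorem uniqueness_of_disintegration_general {X : Type*} [MeasurableSpace X]
    [MeasurableSpace.CountablyGenerated X]
    (μ : Measure X) [IsProbabilityMeasure μ]
    (ℙ : Set (Set X)) (hpart : IsPartition ℙ)
    (ν ν' : Set X → Measure X)
    (hν : IsDisintegration μ ℙ ν) (hν' : IsDisintegration μ ℙ ν') :
    ∀ᵐ x ∂μ, ν (partOf ℙ x) = ν' (partOf ℙ x) := by
  have := hν.isProbabilityMeasure hpart
  exact ae_eq_of_forall_ae_apply_eq fun E hE => hν.ae_apply_eq hpart hν' hE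

/-- If the σ-algebra is countably generated then any two disintegrations of a
probability measure `μ` with respect to a partition `ℙ` into measurable sets agree for
`μ̂`-almost every `P` (equivalently, after pulling back along the canonical projection,
for `μ`-almost every `x`). -/
theorem uniqueness_of_disintegration {X : Type*} [MeasurableSpace X]
    [MeasurableSpace.CountablyGenerated X]
    (μ : Measure X) [IsProbabilityMeasure μ]
    (ℙ : Set (Set X)) (hpart : IsPartition ℙ) (hmeas : ∀ P ∈ ℙ, MeasurableSet P)
    (ν ν' : Set X → Measure X)
    (hν : IsDisintegration μ ℙ ν) (hν' : IsDisintegration μ ℙ ν') :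
    ∀ᵐ x ∂μ, ν (partOf ℙ x) = ν' (partOf ℙ x) :=
  uniqueness_of_disintegration_general μ ℙ hpart ν ν' hν hν'

end ErgodicDecomposition
end

section
/- Let X be a complete separable metric space, μ a Borel probability measure on X, and ℙ a measurable partition of X for μ. Then there exists a disintegration {μ_P : P ∈ ℙ} of μ with respect to ℙ. -/
open MeasureTheory Filter Set Topology

namespace ErgodicDecomposition

variable {X : Type*}

/-! The partitions `Ps n` generate a countably generated sub-σ-algebra `m` whose atoms are the
sets `⋂ n, P_n(x)`. On a standard Borel space the conditional expectation kernel
`κ = condExpKernel μ m` exists; `x ↦ κ x` is `m`-measurable, hence constant on atoms, and for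
`μ`-a.e. `x` the measure `κ x` is concentrated on `X₀ ∩ ⋂ n, P_n(x)`. Such an atom meets `X₀`, so
it is the `ℙ`-element of `x`. On the full-measure set `W` of these points `κ` therefore descends
to `ℙ`; `W` is a union of `ℙ`-elements, and off `W` one may take `μ_P = μ`. -/

open ProbabilityTheory (condExpKernel measurable_condExpKernel compProd_trim_condExpKernel)

section Partition

variable {ℙ : Set (Set X)}

lemma partOf_mem_and_mem (h : IsPartition ℙ) (x : X) : partOf ℙ x ∈ ℙ ∧ x ∈ partOf ℙ x := by
  have hx : ∃ P, P ∈ ℙ ∧ x ∈ P := (h x).exists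
  rw [partOf, dif_pos hx]
  exact hx.choose_spec

lemma partOf_eq_of_mem_s1 (h : IsPartition ℙ) {x : X} {P : Set X} (hP : P ∈ ℙ) (hx : x ∈ P) :
    partOf ℙ x = P :=
  (h x).unique (partOf_mem_and_mem h x) ⟨hP, hx⟩

lemma partOf_eq_of_mem_partOf (h : IsPartition ℙ) {x y : X} (hy : y ∈ partOf ℙ x) :
    partOf ℙ y = partOf ℙ x :=
  partOf_eq_of_mem_s1 h (partOf_mem_and_mem h x).1 hy

lemma measurable_partOf_apply [MeasurableSpace X] {β : Type*} [MeasurableSpace β]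
    (h : IsPartition ℙ) (hc : ℙ.Countable) (hℙm : ∀ P ∈ ℙ, MeasurableSet P)
    {f : Set X → X → β} (hf : ∀ P ∈ ℙ, Measurable (f P)) :
    Measurable fun x => f (partOf ℙ x) x := by
  intro B hB
  have hpre : (fun x => f (partOf ℙ x) x) ⁻¹' B = ⋃ P ∈ ℙ, P ∩ f P ⁻¹' B := by
    ext x
    simp only [mem_preimage, mem_iUnion, mem_inter_iff, exists_prop]
    refine ⟨fun hx => ⟨_, (partOf_mem_and_mem h x).1, (partOf_mem_and_mem h x).2, hx⟩, ?_⟩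
    rintro ⟨P, hP, hxP, hx⟩
    rwa [partOf_eq_of_mem_s1 h hP hxP]
  rw [hpre]
  exact .biUnion hc fun P hP => (hℙm P hP).inter (hf P hP hB)

lemma measurableSet_setOf_ae_mem_partOf [MeasurableSpace X] {Q : Set (Set X)}
    (hQ : IsPartition Q) (hc : Q.Countable) (hQm : ∀ P ∈ Q, MeasurableSet P) {κ : X → Measure X}
    (hκm : ∀ E, MeasurableSet E → Measurable fun x => κ x E) :
    MeasurableSet {x | ∀ᵐ y ∂κ x, y ∈ partOf Q x} :=
  measurable_partOf_apply hQ hc hQm (f := fun P x => κ x Pᶜ)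
    (fun P hP => hκm _ (hQm P hP).compl) (measurableSet_singleton 0)

end Partition

def atom (Ps : ℕ → Set (Set X)) (x : X) : Set X := ⋂ n, partOf (Ps n) x

section Atom

variable {Ps : ℕ → Set (Set X)}

lemma mem_atom_self (hPs : ∀ n, IsPartition (Ps n)) (x : X) : x ∈ atom Ps x :=
  mem_iInter.2 fun n => (partOf_mem_and_mem (hPs n) x).2

lemma partOf_eq_of_mem_atom (hPs : ∀ n, IsPartition (Ps n)) {x y : X} (hy : y ∈ atom Ps x)
    (n : ℕ) : partOf (Ps n) y = partOf (Ps n) x :=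
  partOf_eq_of_mem_partOf (hPs n) (mem_iInter.1 hy n)

lemma atom_eq_of_mem_atom (hPs : ∀ n, IsPartition (Ps n)) {x y : X} (hy : y ∈ atom Ps x) :
    atom Ps y = atom Ps x :=
  iInter_congr (partOf_eq_of_mem_atom hPs hy)

lemma generateFrom_iUnion_le [MeasurableSpace X] (hPsm : ∀ n, ∀ P ∈ Ps n, MeasurableSet P) :
    MeasurableSpace.generateFrom (⋃ n, Ps n) ≤ ‹MeasurableSpace X› :=
  MeasurableSpace.generateFrom_le fun P hP =>
    let ⟨n, hPn⟩ := mem_iUnion.1 hP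
    hPsm n P hPn

lemma mem_iff_of_mem_atom (hPs : ∀ n, IsPartition (Ps n)) {S : Set X}
    (hS : MeasurableSet[.generateFrom (⋃ n, Ps n)] S) {x y : X} (hy : y ∈ atom Ps x) :
    y ∈ S ↔ x ∈ S := by
  induction S, hS using MeasurableSpace.generateFrom_induction with
  | hC P hP _ =>
    obtain ⟨n, hP⟩ := mem_iUnion.1 hP
    constructor
    · intro hyP
      rw [← partOf_eq_of_mem_s1 (hPs n) hP hyP, partOf_eq_of_mem_atom hPs hy]
      exact (partOf_mem_and_mem (hPs n) x).2
    · intro hxP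
      rw [← partOf_eq_of_mem_s1 (hPs n) hP hxP]
      exact mem_iInter.1 hy n
  | empty => simp
  | compl _ _ ih => exact not_congr ih
  | iUnion _ _ ih => simp only [mem_iUnion]; exact exists_congr ih

lemma apply_eq_of_mem_atom (hPs : ∀ n, IsPartition (Ps n)) {β : Type*} [MeasurableSpace β]
    [MeasurableSingletonClass β] {f : X → β} (hf : Measurable[.generateFrom (⋃ n, Ps n)] f)
    {x y : X} (hy : y ∈ atom Ps x) : f y = f x :=
  (mem_iff_of_mem_atom hPs (hf (measurableSet_singleton (f x))) hy).2 rfl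

lemma partOf_eq_atom_of_ae [MeasurableSpace X] {ℙ : Set (Set X)} (hℙ : IsPartition ℙ)
    (hPs : ∀ n, IsPartition (Ps n)) {X₀ : Set X} (hX₀ : ∀ z ∈ X₀, partOf ℙ z = atom Ps z)
    {ρ : Measure X} [NeZero ρ] {x : X} (hρX₀ : ∀ᵐ z ∂ρ, z ∈ X₀)
    (hρPs : ∀ n, ∀ᵐ z ∂ρ, z ∈ partOf (Ps n) x) :
    partOf ℙ x = atom Ps x := by
  obtain ⟨z, hzX₀, hzx⟩ := (hρX₀.and (ae_all_iff.2 hρPs)).exists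
  have hz : partOf ℙ z = atom Ps x := by
    rw [hX₀ z hzX₀, atom_eq_of_mem_atom hPs (mem_iInter.2 hzx)]
  rw [← hz, partOf_eq_of_mem_partOf hℙ (hz ▸ mem_atom_self hPs x)]

end Atom

section CondExpKernel

variable {Ω : Type*} {m : MeasurableSpace Ω} [mΩ : MeasurableSpace Ω] [StandardBorelSpace Ω]
  {μ : Measure Ω} [IsFiniteMeasure μ]

lemma setLIntegral_condExpKernel (hm : m ≤ mΩ) {s t : Set Ω} (hs : MeasurableSet[m] s)
    (ht : MeasurableSet t) : ∫⁻ x in s, condExpKernel μ m x t ∂μ = μ (s ∩ t) := by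
  calc ∫⁻ x in s, condExpKernel μ m x t ∂μ
      = ∫⁻ x in s, condExpKernel μ m x t ∂μ.trim hm :=
        (setLIntegral_trim hm (measurable_condExpKernel ht) hs).symm
    _ = ((μ.trim hm).compProd (condExpKernel μ m)) (s ×ˢ t) :=
        (Measure.compProd_apply_prod hs ht).symm
    _ = μ (s ∩ t) := by
        have hdiag : Measurable[mΩ, m.prod mΩ] Function.diag :=
          (measurable_id'' hm).prodMk measurable_id
        rw [compProd_trim_condExpKernel, Measure.map_apply hdiag (hs.prod ht), diag_preimage_prod]

lemma lintegral_condExpKernel (hm : m ≤ mΩ) {t : Set Ω} (ht : MeasurableSet t) :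
    ∫⁻ x, condExpKernel μ m x t ∂μ = μ t := by
  simpa using setLIntegral_condExpKernel (μ := μ) hm MeasurableSet.univ ht

lemma ae_ae_condExpKernel_mem (hm : m ≤ mΩ) {s t : Set Ω} (hs : MeasurableSet[m] s)
    (ht : MeasurableSet t) (hst : μ (s \ t) = 0) :
    ∀ᵐ x ∂μ, x ∈ s → ∀ᵐ y ∂condExpKernel μ m x, y ∈ t := by
  have hzero : ∫⁻ x in s, condExpKernel μ m x tᶜ ∂μ = 0 := by
    rwa [setLIntegral_condExpKernel hm hs ht.compl, ← sdiff_eq]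
  rw [lintegral_eq_zero_iff ((measurable_condExpKernel ht.compl).mono hm le_rfl)] at hzero
  exact (ae_restrict_iff' (hm s hs)).1 hzero

end CondExpKernel

section CondExpKernelAtom

variable {Ps : ℕ → Set (Set X)} [MeasurableSpace X] [StandardBorelSpace X] {μ : Measure X}
  [IsFiniteMeasure μ]

lemma condExpKernel_eq_of_mem_atom (hPs : ∀ n, IsPartition (Ps n)) {x y : X}
    (hy : y ∈ atom Ps x) :
    condExpKernel μ (.generateFrom (⋃ n, Ps n)) y =
      condExpKernel μ (.generateFrom (⋃ n, Ps n)) x :=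
  Measure.ext fun _ hE => apply_eq_of_mem_atom hPs (measurable_condExpKernel hE) hy

lemma ae_ae_condExpKernel_mem_partOf (hPs : ∀ n, IsPartition (Ps n))
    (hc : ∀ n, (Ps n).Countable) (hPsm : ∀ n, ∀ P ∈ Ps n, MeasurableSet P) :
    ∀ᵐ x ∂μ, ∀ n, ∀ᵐ y ∂condExpKernel μ (.generateFrom (⋃ n, Ps n)) x, y ∈ partOf (Ps n) x := by
  refine ae_all_iff.2 fun n => ?_
  have hP : ∀ᵐ x ∂μ, ∀ P ∈ Ps n, x ∈ P →
      ∀ᵐ y ∂condExpKernel μ (.generateFrom (⋃ n, Ps n)) x, y ∈ P :=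
    (ae_ball_iff (hc n)).2 fun P hP => ae_ae_condExpKernel_mem (generateFrom_iUnion_le hPsm)
      (MeasurableSpace.measurableSet_generateFrom (mem_iUnion.2 ⟨n, hP⟩)) (hPsm n P hP)
      (by simp)
  filter_upwards [hP] with x hx
  exact hx _ (partOf_mem_and_mem (hPs n) x).1 (partOf_mem_and_mem (hPs n) x).2

end CondExpKernelAtom

section Glue

open Classical

variable [MeasurableSpace X] {ℙ : Set (Set X)}

noncomputable def partMeasure (μ : Measure X) (κ : X → Measure X) (W P : Set X) : Measure X :=
  if h : (P ∩ W).Nonempty then κ h.some else μ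

lemma partMeasure_partOf (hℙ : IsPartition ℙ) (μ : Measure X) {κ : X → Measure X} {W : Set X}
    (hW : ∀ x ∈ W, ∀ y ∈ partOf ℙ x, y ∈ W ∧ κ y = κ x) (x : X) :
    partMeasure μ κ W (partOf ℙ x) = W.piecewise κ (fun _ => μ) x := by
  by_cases hx : x ∈ W
  · have hne : (partOf ℙ x ∩ W).Nonempty := ⟨x, (partOf_mem_and_mem hℙ x).2, hx⟩
    rw [partMeasure, dif_pos hne, piecewise_eq_of_mem _ _ _ hx]
    exact (hW x hx _ hne.some_mem.1).2
  · rw [partMeasure, dif_neg, piecewise_eq_of_notMem _ _ _ hx]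
    rintro ⟨y, hyx, hyW⟩
    exact hx (hW y hyW x (partOf_eq_of_mem_partOf hℙ hyx ▸ (partOf_mem_and_mem hℙ x).2)).1

lemma isDisintegration_partMeasure (hℙ : IsPartition ℙ) {μ : Measure X} [IsProbabilityMeasure μ]
    {κ : X → Measure X} [∀ x, IsProbabilityMeasure (κ x)]
    (hκm : ∀ E, MeasurableSet E → Measurable fun x => κ x E)
    (hκμ : ∀ E, MeasurableSet E → ∫⁻ x, κ x E ∂μ = μ E)
    {W : Set X} (hWm : MeasurableSet W) (hWμ : ∀ᵐ x ∂μ, x ∈ W)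
    (hW : ∀ x ∈ W, ∀ y ∈ partOf ℙ x, y ∈ W ∧ κ y = κ x)
    (hκℙ : ∀ x ∈ W, ∀ᵐ y ∂κ x, y ∈ partOf ℙ x) :
    IsDisintegration μ ℙ (partMeasure μ κ W) := by
  have happly (E : Set X) : (fun x => partMeasure μ κ W (partOf ℙ x) E) =
      W.piecewise (fun x => κ x E) (fun _ => μ E) := by
    ext x
    rw [partMeasure_partOf hℙ μ hW]
    by_cases hx : x ∈ W <;> simp [hx]
  refine ⟨fun P _ => ?_, ?_, fun E hE => ⟨?_, ?_⟩⟩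
  · unfold partMeasure
    split_ifs <;> infer_instance
  · filter_upwards [hWμ] with x hx
    rw [partMeasure_partOf hℙ μ hW, piecewise_eq_of_mem _ _ _ hx]
    exact (measure_congr (ae_eq_univ.2 (hκℙ x hx))).trans measure_univ
  · rw [happly]
    exact (hκm E hE).piecewise hWm measurable_const
  · have hae : W.piecewise (fun x => κ x E) (fun _ => μ E) =ᵐ[μ] fun x => κ x E :=
      hWμ.mono fun x hx => piecewise_eq_of_mem W _ _ hx
    rw [happly, lintegral_congr_ae hae, hκμ E hE]

end Glue

/-- Rokhlin disintegration theorem: on a complete separable metric space, every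
Borel probability measure admits a disintegration with respect to any measurable partition. -/
theorem rokhlin_disintegration {X : Type*} [MetricSpace X] [CompleteSpace X]
    [TopologicalSpace.SeparableSpace X] [MeasurableSpace X] [BorelSpace X]
    (μ : Measure X) [IsProbabilityMeasure μ]
    (ℙ : Set (Set X)) (hℙ : IsMeasurablePartition μ ℙ) :
    ∃ ν : Set X → Measure X, IsDisintegration μ ℙ ν := by
  obtain ⟨hℙ, -, X₀, hX₀m, hμX₀, Ps, hc, hPs, hPsm, -, hatom⟩ := hℙ
  have hm := generateFrom_iUnion_le hPsm
  set κ := condExpKernel μ (.generateFrom (⋃ n, Ps n))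
  have (x : X) : IsProbabilityMeasure (κ x) :=
    ProbabilityTheory.IsMarkovKernel.isProbabilityMeasure x
  have hκm (E : Set X) (hE : MeasurableSet E) : Measurable fun x => κ x E :=
    (measurable_condExpKernel hE).mono hm le_rfl
  set W := {x | ∀ᵐ y ∂κ x, y ∈ X₀} ∩ ⋂ n, {x | ∀ᵐ y ∂κ x, y ∈ partOf (Ps n) x}
  have hWatom (x : X) (hx : x ∈ W) : partOf ℙ x = atom Ps x :=
    partOf_eq_atom_of_ae hℙ hPs hatom hx.1 fun n => (mem_iInter.1 hx.2) n
  refine ⟨_, isDisintegration_partMeasure hℙ hκm (fun E hE => lintegral_condExpKernel hm hE)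
    (W := W) ?_ ?_ (fun x hx y hy => ?_) (fun x hx => ?_)⟩
  · exact (hκm _ hX₀m.compl (measurableSet_singleton 0)).inter <| .iInter fun n =>
      measurableSet_setOf_ae_mem_partOf (hPs n) (hc n) (hPsm n) hκm
  · have hX₀ : ∀ᵐ x ∂μ, ∀ᵐ y ∂κ x, y ∈ X₀ := by
      simpa using ae_ae_condExpKernel_mem hm .univ hX₀m
        (by rwa [← compl_eq_univ_sdiff, prob_compl_eq_zero_iff hX₀m])
    filter_upwards [hX₀, ae_ae_condExpKernel_mem_partOf hPs hc hPsm] with x hx₀ hxPs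
    exact ⟨hx₀, mem_iInter.2 hxPs⟩
  · rw [hWatom x hx] at hy
    have hκ : κ y = κ x := condExpKernel_eq_of_mem_atom hPs hy
    refine ⟨?_, hκ⟩
    simpa only [W, mem_inter_iff, mem_iInter, mem_ofPred_eq, hκ, partOf_eq_of_mem_atom hPs hy]
      using hx
  · simpa only [hWatom x hx, atom, mem_iInter] using ae_all_iff.2 fun n => (mem_iInter.1 hx.2) n

end ErgodicDecomposition
end

section
/- Let X be a complete separable metric space with its Borel σ-algebra, μ a Borel probability measure on X, f : X → X a Borel-measurable map, and 𝒜₀ a countable algebra of Borel sets generating the Borel σ-algebra. Then the dynamical partition ℙ_f of X with respect to f and 𝒜₀ is a measurable partition for μ. -/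
open MeasureTheory Filter Set Topology

namespace ErgodicDecomposition

variable {X : Type*}

/-! Auxiliary lemmas -/

def cls {X I β : Type*} (F : X → I → β) (x : X) : Set X := {y | ∀ i, F y i = F x i}

lemma mem_cls_self {X I β : Type*} (F : X → I → β) (x : X) : x ∈ cls F x := fun _ => rfl

lemma cls_eq_of_mem {X I β : Type*} {F : X → I → β} {x y : X} (h : x ∈ cls F y) :
    cls F y = cls F x := by
  ext z
  constructor <;> intro hz i
  · rw [hz i, ← h i]
  · rw [hz i, h i]

lemma isPartition_cls {X I β : Type*} (F : X → I → β) :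
    IsPartition {P | ∃ x, P = cls F x} := by
  intro x
  refine ⟨cls F x, ⟨⟨x, rfl⟩, mem_cls_self F x⟩, ?_⟩
  rintro P ⟨⟨z, rfl⟩, hx⟩
  exact cls_eq_of_mem hx

lemma partOf_cls {X I β : Type*} (F : X → I → β) (x : X) :
    partOf {P | ∃ x, P = cls F x} x = cls F x := by
  rw [partOf]
  have h : ∃ P, P ∈ {P | ∃ x, P = cls F x} ∧ x ∈ P :=
    ⟨cls F x, ⟨x, rfl⟩, mem_cls_self F x⟩
  rw [dif_pos h]
  obtain ⟨⟨z, hz⟩, hx⟩ := h.choose_spec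
  rw [hz] at hx ⊢
  exact cls_eq_of_mem hx

lemma floor_half_eq (a : ℝ) : ⌊a⌋ = ⌊((⌊2 * a⌋ : ℝ)) / 2⌋ := by
  have h1 : ((⌊2*a⌋ : ℝ)) ≤ 2 * a := Int.floor_le _
  have h2 : 2 * a < (⌊2*a⌋ : ℝ) + 1 := Int.lt_floor_add_one _
  have hle : ((⌊2*a⌋ : ℝ)) / 2 ≤ a := by linarith
  refine le_antisymm ?_ (Int.floor_le_floor hle)
  rw [Int.le_floor]
  have h3 : (⌊a⌋ : ℝ) ≤ a := Int.floor_le a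
  have h4 : (2 : ℝ) * ⌊a⌋ < ⌊2*a⌋ + 1 := by linarith
  have h5 : (2 : ℤ) * ⌊a⌋ < ⌊2*a⌋ + 1 := by exact_mod_cast h4
  have h6 : (2 : ℤ) * ⌊a⌋ ≤ ⌊2*a⌋ := by omega
  have : ((2 : ℝ)) * ⌊a⌋ ≤ (⌊2*a⌋ : ℝ) := by exact_mod_cast h6
  linarith

lemma floor_eq_of_floor_two_mul_eq {a b : ℝ} (h : ⌊2*a⌋ = ⌊2*b⌋) : ⌊a⌋ = ⌊b⌋ := by
  rw [floor_half_eq a, h, ← floor_half_eq b]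

lemma measurable_visitFreq [MeasurableSpace X] {f : X → X} (hf : Measurable f)
    {A : Set X} (hA : MeasurableSet A) : Measurable (visitFreq f A) := by
  classical
  apply Measurable.liminf
  intro n
  have : (fun x => (((Finset.range n).filter fun i => f^[i] x ∈ A).card : ℝ))
      = fun x => ∑ i ∈ Finset.range n, (if f^[i] x ∈ A then (1:ℝ) else 0) := by
    funext x
    rw [Finset.card_filter]
    push_cast
    rfl
  apply Measurable.div_const
  rw [this]
  apply Finset.measurable_sum
  intro i _
  exact Measurable.ite ((hf.iterate i) hA) measurable_const measurable_const

/-- the dynamical partition with respect to a Borel measurable map `f` and a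
countable algebra `𝒜₀` generating the Borel σ-algebra is a measurable partition for `μ`. -/
theorem dynPartition_isMeasurablePartition {X : Type*} [MetricSpace X] [CompleteSpace X]
    [TopologicalSpace.SeparableSpace X] [MeasurableSpace X] [BorelSpace X]
    (μ : Measure X) [IsProbabilityMeasure μ]
    (f : X → X) (hf : Measurable f)
    (𝒜₀ : Set (Set X)) (hcount : 𝒜₀.Countable)
    (halg : MeasureTheory.IsSetAlgebra 𝒜₀)
    (hgen : MeasurableSpace.generateFrom 𝒜₀ = ‹MeasurableSpace X›) :
    IsMeasurablePartition μ (dynPartition f 𝒜₀) := by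
  -- enumerate 𝒜₀
  obtain ⟨e, he⟩ := hcount.exists_eq_range ⟨∅, halg.empty_mem⟩
  have hmeasA : ∀ A ∈ 𝒜₀, MeasurableSet A := by
    intro A hA
    rw [← hgen]
    exact MeasurableSpace.measurableSet_generateFrom hA
  set g : ℕ → X → ℝ := fun n => visitFreq f (e n) with hg
  have hgm : ∀ n, Measurable (g n) := by
    intro n
    exact measurable_visitFreq hf (hmeasA (e n) (he ▸ Set.mem_range_self n))
  set G : X → ℕ → ℝ := fun y n => g n y with hG
  -- dynClass is the cls of G
  have hdc : ∀ x, dynClass f 𝒜₀ x = cls G x := by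
    intro x
    ext y
    constructor
    · intro hy n
      exact hy (e n) (he ▸ Set.mem_range_self n)
    · intro hy A hA
      rw [he] at hA
      obtain ⟨n, rfl⟩ := hA
      exact hy n
  have hdp : dynPartition f 𝒜₀ = {P | ∃ x, P = cls G x} := by
    ext P
    constructor
    · rintro ⟨x, rfl⟩; exact ⟨x, hdc x⟩
    · rintro ⟨x, rfl⟩; exact ⟨x, (hdc x).symm⟩
  rw [hdp]
  -- the approximating family
  set Fn : (n : ℕ) → X → Fin n → ℤ := fun n y i => ⌊g i y * 2 ^ n⌋ with hFn
  refine ⟨isPartition_cls G, ?_, Set.univ, MeasurableSet.univ, measure_univ,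
    fun n => {P | ∃ x, P = cls (Fn n) x}, ?_, fun n => isPartition_cls (Fn n), ?_, ?_, ?_⟩
  · -- measurability of elements of the partition
    rintro P ⟨x, rfl⟩
    have : cls G x = ⋂ n, (g n) ⁻¹' {g n x} := by
      ext y; simp [cls, G, Set.mem_iInter, Set.mem_preimage]
    rw [this]
    exact MeasurableSet.iInter fun n => (hgm n) (measurableSet_singleton _)
  · -- countability
    intro n
    have hsub : {P | ∃ x, P = cls (Fn n) x} ⊆
        Set.range (fun v : Fin n → ℤ => {y | ∀ i, Fn n y i = v i}) := by
      rintro P ⟨x, rfl⟩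
      exact ⟨fun i => Fn n x i, rfl⟩
    exact (Set.countable_range _).mono hsub
  · -- measurability of Ps n elements
    rintro n P ⟨x, rfl⟩
    have : cls (Fn n) x = ⋂ i : Fin n, (fun y => Fn n y i) ⁻¹' {Fn n x i} := by
      ext y; simp [cls, Set.mem_iInter, Set.mem_preimage]
    rw [this]
    refine MeasurableSet.iInter fun i => ?_
    have : Measurable fun y => Fn n y i :=
      (((hgm i).mul_const _).floor)
    exact this (measurableSet_singleton _)
  · -- refinement
    rintro n B ⟨x, rfl⟩
    refine ⟨cls (Fn n) x, ⟨x, rfl⟩, ?_⟩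
    intro y hy i
    have h := hy ⟨i, Nat.lt_succ_of_lt i.isLt⟩
    simp only [Fn] at h ⊢
    apply floor_eq_of_floor_two_mul_eq
    have hy2 : g i y * 2 ^ (n+1) = 2 * (g i y * 2 ^ n) := by ring
    have hx2 : g i x * 2 ^ (n+1) = 2 * (g i x * 2 ^ n) := by ring
    rw [← hy2, ← hx2]
    exact h
  · -- intersection property
    intro x _
    rw [partOf_cls]
    have : ∀ n, partOf {P | ∃ z, P = cls (Fn n) z} x = cls (Fn n) x :=
      fun n => partOf_cls (Fn n) x
    simp_rw [this]
    ext y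
    simp only [Set.mem_iInter]
    constructor
    · intro hy n i
      simp only [Fn]
      have h : g (↑i) y = g (↑i) x := hy ↑i
      rw [h]
    · intro hy i
      -- show g i y = g i x
      by_contra hne
      have hd : 0 < |g i y - g i x| := abs_pos.mpr (sub_ne_zero.mpr hne)
      obtain ⟨n, hn⟩ := exists_pow_lt_of_lt_one hd (by norm_num : (1/2 : ℝ) < 1)
      set m := max n (i + 1) with hm
      have him : (i : ℕ) < m := lt_of_lt_of_le (Nat.lt_succ_self i) (le_max_right _ _)
      have hfl := hy m ⟨i, him⟩
      simp only [Fn] at hfl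
      have h1 : |g i y * 2 ^ m - g i x * 2 ^ m| < 1 := by
        have hfy1 : (⌊g i y * 2 ^ m⌋ : ℝ) ≤ g i y * 2 ^ m := Int.floor_le _
        have hfy2 : g i y * 2 ^ m < ⌊g i y * 2 ^ m⌋ + 1 := Int.lt_floor_add_one _
        have hfx1 : (⌊g i x * 2 ^ m⌋ : ℝ) ≤ g i x * 2 ^ m := Int.floor_le _
        have hfx2 : g i x * 2 ^ m < ⌊g i x * 2 ^ m⌋ + 1 := Int.lt_floor_add_one _
        rw [hfl] at hfy1 hfy2
        rw [abs_sub_lt_iff]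
        constructor <;> linarith
      have h2 : |g i y - g i x| * 2 ^ m < 1 := by
        calc |g i y - g i x| * 2 ^ m = |(g i y - g i x) * 2 ^ m| := by
              rw [abs_mul, abs_of_pos (by positivity : (0:ℝ) < 2 ^ m)]
          _ = |g i y * 2 ^ m - g i x * 2 ^ m| := by ring_nf
          _ < 1 := h1
      have h3 : |g i y - g i x| < (1/2 : ℝ) ^ m := by
        rw [div_pow, one_pow]
        rw [lt_div_iff₀ (by positivity : (0:ℝ) < 2 ^ m)]
        exact h2
      have h4 : ((1:ℝ)/2) ^ m ≤ (1/2 : ℝ) ^ n :=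
        pow_le_pow_of_le_one (by norm_num) (by norm_num) (le_max_left _ _)
      linarith


end ErgodicDecomposition
end

section
/- Let X be a complete separable metric space and (S_k)_{k∈ℕ} a sequence of open subsets of X whose family forms a basis for the topology of X and in which every term occurs infinitely often (for each k there are infinitely many l with S_l = S_k). Write S^1 = S and S^0 = X \ S, and let φ : X → {0,1}^ℕ be φ(x) = (χ_{S_k}(x))_{k∈ℕ}. Then a sequence (i_k)_{k∈ℕ} ∈ {0,1}^ℕ belongs to the image φ(X) if and only if: (1) for every n ∈ ℕ, ⋂_{k=1}^{n} S_k^{i_k} ≠ ∅; (2) there exists j with i_j = 1 and diam(S_j) ≤ 1; and (3) for every j with i_j = 1 there exists l > j with i_l = 1, closure(S_l) ⊆ S_j, and diam(S_l) ≤ diam(S_j)/2. -/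
open MeasureTheory Filter Set Topology

namespace ErgodicDecomposition

variable {X : Type*}

open Classical in
/-- The map `φ : X → {0,1}^ℕ`, `φ(x) = (χ_{S k}(x))ₖ`. -/
noncomputable def phi {X : Type*} (S : ℕ → Set X) (x : X) : ℕ → Bool :=
  fun k => decide (x ∈ S k)

/-- `S_k^{i_k}`: `S k` if `i k = 1` and its complement if `i k = 0`. -/
def side {X : Type*} (S : ℕ → Set X) (i : ℕ → Bool) (k : ℕ) : Set X :=
  if i k = true then S k else (S k)ᶜ

/-! Around any point, basic sets of arbitrarily small diameter have closure inside a given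
open set; with every `S k` repeated infinitely often this gives conditions (2) and (3) for `φ x`.
Conversely, (2) and (3) give a nested chain `S (c 0) ⊇ S (c 1) ⊇ ⋯` of sets coded by `1` with
halving diameters, and witnesses of (1) of length `c n + 1` form a Cauchy sequence. Its limit
`x` has code `i`: if `i k = 1`, condition (3) gives `l` with `i l = 1` and `closure (S l) ⊆ S k`,
and `x ∈ closure (S l)`; if `i k = 0`, the open set `S k` cannot contain `x`, since the sequence
eventually avoids it. -/

theorem mem_side_iff {X : Type*} {S : ℕ → Set X} {i : ℕ → Bool} {k : ℕ} {x : X} :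
    x ∈ side S i k ↔ phi S x k = i k := by
  unfold side phi
  cases i k <;> simp

theorem mem_iInter_side_iff {X : Type*} {S : ℕ → Set X} {i : ℕ → Bool} {n : ℕ} {x : X} :
    x ∈ ⋂ k ∈ Finset.range n, side S i k ↔ ∀ k < n, phi S x k = i k := by
  simp only [mem_iInter, Finset.mem_range, mem_side_iff]

theorem phi_eq_of_tendsto {X : Type*} [TopologicalSpace X] {S : ℕ → Set X}
    (hopen : ∀ k, IsOpen (S k)) {i : ℕ → Bool}
    (hclosure : ∀ j, i j = true → ∃ l, i l = true ∧ closure (S l) ⊆ S j)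
    {q : ℕ → X} {x : X} (hq : Tendsto q atTop (𝓝 x))
    (hcode : ∀ k, ∀ᶠ n in atTop, phi S (q n) k = i k) :
    phi S x = i := by
  funext k
  cases hik : i k with
  | false =>
    have hout : ∀ᶠ n in atTop, q n ∉ S k := by
      filter_upwards [hcode k] with n hn
      simpa [phi, hik] using hn
    simp only [phi, decide_eq_false_iff_not]
    intro hxk
    obtain ⟨n, hin, hout⟩ := ((hq.eventually_mem ((hopen k).mem_nhds hxk)).and hout).exists
    exact hout hin
  | true =>
    obtain ⟨l, hil, hlk⟩ := hclosure k hik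
    have hin : ∀ᶠ n in atTop, q n ∈ S l := by
      filter_upwards [hcode l] with n hn
      simpa [phi, hil] using hn
    simpa [phi] using hlk (mem_closure_of_tendsto hq hin)

theorem exists_mem_basis_closure_subset_ediam_le {X : Type*} [PseudoEMetricSpace X]
    {B : Set (Set X)} (hB : TopologicalSpace.IsTopologicalBasis B) {u : Set X} (hu : IsOpen u)
    {x : X} (hx : x ∈ u) {ε : ENNReal} (hε : 0 < ε) :
    ∃ s ∈ B, x ∈ s ∧ closure s ⊆ u ∧ Metric.ediam s ≤ ε := by
  have hnhds : u ∩ Metric.eball x (ε / 2) ∈ 𝓝 x :=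
    inter_mem (hu.mem_nhds hx) (Metric.eball_mem_nhds x (ENNReal.half_pos hε.ne'))
  obtain ⟨t, ht, htc, htsub⟩ := exists_mem_nhds_isClosed_subset hnhds
  obtain ⟨s, hsB, hxs, hst⟩ := hB.mem_nhds_iff.1 ht
  refine ⟨s, hsB, hxs, (closure_minimal hst htc).trans fun y hy => (htsub hy).1, ?_⟩
  calc Metric.ediam s ≤ Metric.ediam (Metric.eball x (ε / 2)) :=
        Metric.ediam_mono (hst.trans fun y hy => (htsub hy).2)
    _ ≤ 2 * (ε / 2) := Metric.ediam_eball_le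
    _ = ε := ENNReal.mul_div_cancel two_ne_zero ENNReal.ofNat_ne_top

theorem exists_mem_basis_closure_subset_ediam_le_half {X : Type*} [EMetricSpace X]
    {B : Set (Set X)} (hB : TopologicalSpace.IsTopologicalBasis B) {s : Set X} (hs : s ∈ B)
    {x : X} (hx : x ∈ s) :
    ∃ t ∈ B, x ∈ t ∧ closure t ⊆ s ∧ Metric.ediam t ≤ Metric.ediam s / 2 := by
  by_cases h0 : Metric.ediam s = 0
  · have hclosed : IsClosed s := (Metric.ediam_eq_zero_iff.1 h0).isClosed
    exact ⟨s, hs, hx, hclosed.closure_subset, by simp [h0]⟩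
  · exact exists_mem_basis_closure_subset_ediam_le hB (hB.isOpen hs) hx (ENNReal.half_pos h0)

theorem exists_halving_chain {X : Type*} [PseudoEMetricSpace X] {S : ℕ → Set X} {i : ℕ → Bool}
    (hstart : ∃ j, i j = true ∧ Metric.ediam (S j) ≤ 1)
    (hnext : ∀ j, i j = true → ∃ l, j < l ∧ i l = true ∧ closure (S l) ⊆ S j ∧
      Metric.ediam (S l) ≤ Metric.ediam (S j) / 2) :
    ∃ c : ℕ → ℕ, StrictMono c ∧ (∀ n, i (c n) = true) ∧ Antitone (fun n => S (c n)) ∧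
      ∀ n, Metric.ediam (S (c n)) ≤ 2⁻¹ ^ n := by
  obtain ⟨j₀, hj₀, hdiam₀⟩ := hstart
  choose next hnext using fun j : {j // i j = true} => hnext j j.2
  let g : ℕ → {j // i j = true} := fun n => (fun j => ⟨next j, (hnext j).2.1⟩)^[n] ⟨j₀, hj₀⟩
  have hg : ∀ n, (g (n + 1)).1 = next (g n) := fun n =>
    congrArg Subtype.val (Function.iterate_succ_apply' _ n _)
  refine ⟨fun n => g n, strictMono_nat_of_lt_succ fun n => ?_, fun n => (g n).2,
    antitone_nat_of_succ_le fun n => ?_, fun n => ?_⟩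
  · simp only [hg]; exact (hnext _).1
  · simp only [hg]; exact subset_closure.trans (hnext _).2.2.1
  · induction n with
    | zero => rw [pow_zero]; exact hdiam₀
    | succ n ih =>
      calc Metric.ediam (S (g (n + 1))) ≤ Metric.ediam (S (g n)) / 2 := by
            rw [hg]; exact (hnext _).2.2.2
        _ ≤ 2⁻¹ ^ n / 2 := by gcongr
        _ = 2⁻¹ ^ (n + 1) := by rw [pow_succ, div_eq_mul_inv]

theorem cauchySeq_of_mem_of_ediam_le {X : Type*} [PseudoEMetricSpace X] {s : ℕ → Set X}
    (hs : Antitone s) (hdiam : ∀ n, Metric.ediam (s n) ≤ 2⁻¹ ^ n) {q : ℕ → X}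
    (hq : ∀ n, q n ∈ s n) : CauchySeq q := by
  refine cauchySeq_of_edist_le_geometric 2⁻¹ 1 (by norm_num) ENNReal.one_ne_top fun n => ?_
  rw [one_mul]
  exact (Metric.edist_le_ediam_of_mem (hq n) (hs n.le_succ (hq (n + 1)))).trans (hdiam n)

theorem phi_satisfies_conditions {X : Type*} [EMetricSpace X] {S : ℕ → Set X}
    (hbasis : TopologicalSpace.IsTopologicalBasis (Set.range S))
    (hrep : ∀ k, {l | S l = S k}.Infinite) (x : X) :
    (∀ n : ℕ, (⋂ k ∈ Finset.range n, side S (phi S x) k).Nonempty) ∧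
      (∃ j, phi S x j = true ∧ Metric.ediam (S j) ≤ 1) ∧
      (∀ j, phi S x j = true → ∃ l, j < l ∧ phi S x l = true ∧ closure (S l) ⊆ S j ∧
        Metric.ediam (S l) ≤ Metric.ediam (S j) / 2) := by
  refine ⟨fun n => ⟨x, mem_iInter_side_iff.2 fun _ _ => rfl⟩, ?_, fun j hj => ?_⟩
  · obtain ⟨_, ⟨m, rfl⟩, hxm, -, hdiam⟩ :=
      exists_mem_basis_closure_subset_ediam_le hbasis isOpen_univ (mem_univ x) one_pos
    exact ⟨m, by simpa [phi] using hxm, hdiam⟩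
  · have hxj : x ∈ S j := by simpa [phi] using hj
    obtain ⟨_, ⟨m, rfl⟩, hxm, hclosure, hdiam⟩ :=
      exists_mem_basis_closure_subset_ediam_le_half hbasis ⟨j, rfl⟩ hxj
    obtain ⟨l, hlm, hjl⟩ := (hrep m).exists_gt j
    have hlm : S l = S m := hlm
    exact ⟨l, hjl, by simpa [phi, hlm] using hxm, hlm ▸ hclosure, hlm ▸ hdiam⟩

theorem exists_phi_eq_of_conditions {X : Type*} [PseudoEMetricSpace X] [CompleteSpace X]
    {S : ℕ → Set X} (hopen : ∀ k, IsOpen (S k)) {i : ℕ → Bool}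
    (hfinite : ∀ n : ℕ, (⋂ k ∈ Finset.range n, side S i k).Nonempty)
    (hstart : ∃ j, i j = true ∧ Metric.ediam (S j) ≤ 1)
    (hnext : ∀ j, i j = true → ∃ l, j < l ∧ i l = true ∧ closure (S l) ⊆ S j ∧
      Metric.ediam (S l) ≤ Metric.ediam (S j) / 2) :
    ∃ x, phi S x = i := by
  choose p hp using hfinite
  simp only [mem_iInter_side_iff] at hp
  obtain ⟨c, hc_mono, hc_true, hc_anti, hc_diam⟩ := exists_halving_chain hstart hnext
  let q : ℕ → X := fun n => p (c n + 1)
  have hq : ∀ n, q n ∈ S (c n) := fun n => by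
    simpa [phi, hc_true n] using hp (c n + 1) (c n) (Nat.lt_succ_self _)
  obtain ⟨x, hx⟩ := cauchySeq_tendsto_of_complete (cauchySeq_of_mem_of_ediam_le hc_anti hc_diam hq)
  refine ⟨x, phi_eq_of_tendsto hopen (fun j hj => ?_) hx fun k => ?_⟩
  · obtain ⟨l, -, hl, hclosure, -⟩ := hnext j hj
    exact ⟨l, hl, hclosure⟩
  · filter_upwards [eventually_ge_atTop k] with n hn
    exact hp _ _ (Nat.lt_succ_of_le (hn.trans (hc_mono.id_le n)))

theorem mem_image_phi_iff_general {X : Type*} [MetricSpace X] [CompleteSpace X]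
    (S : ℕ → Set X)
    (hbasis : TopologicalSpace.IsTopologicalBasis (Set.range S))
    (hrep : ∀ k, {l | S l = S k}.Infinite)
    (i : ℕ → Bool) :
    (∃ x, phi S x = i) ↔
      ((∀ n : ℕ, (⋂ k ∈ Finset.range n, side S i k).Nonempty) ∧
       (∃ j, i j = true ∧ EMetric.diam (S j) ≤ 1) ∧
       (∀ j, i j = true → ∃ l, j < l ∧ i l = true ∧ closure (S l) ⊆ S j ∧
          EMetric.diam (S l) ≤ EMetric.diam (S j) / 2)) := by
  constructor
  · rintro ⟨x, rfl⟩
    exact phi_satisfies_conditions hbasis hrep x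
  · rintro ⟨hfinite, hstart, hnext⟩
    exact exists_phi_eq_of_conditions (fun k => hbasis.isOpen ⟨k, rfl⟩) hfinite hstart hnext

/-- characterization of the image `φ(X) ⊆ {0,1}^ℕ` for a complete separable
metric space `X` and a sequence of basic open sets in which every term occurs infinitely
often. -/
theorem mem_image_phi_iff {X : Type*} [MetricSpace X] [CompleteSpace X]
    [TopologicalSpace.SeparableSpace X]
    (S : ℕ → Set X) (hopen : ∀ k, IsOpen (S k))
    (hbasis : TopologicalSpace.IsTopologicalBasis (Set.range S))
    (hrep : ∀ k, {l | S l = S k}.Infinite)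
    (i : ℕ → Bool) :
    (∃ x, phi S x = i) ↔
      ((∀ n : ℕ, (⋂ k ∈ Finset.range n, side S i k).Nonempty) ∧
       (∃ j, i j = true ∧ EMetric.diam (S j) ≤ 1) ∧
       (∀ j, i j = true → ∃ l, j < l ∧ i l = true ∧ closure (S l) ⊆ S j ∧
          EMetric.diam (S l) ≤ EMetric.diam (S j) / 2)) :=
  mem_image_phi_iff_general S hbasis hrep i

end ErgodicDecomposition
end

section
/- Let X be a complete separable metric space and (S_k)_{k∈ℕ} an enumeration of a countable basis for the topology of X. Define φ : X → {0,1}^ℕ by φ(x) = (χ_{S_k}(x))_{k∈ℕ}. Then the image φ(X) is a Borel subset of {0,1}^ℕ. -/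
open MeasureTheory Filter Set Topology

namespace ErgodicDecomposition

variable {X : Type*}

/-- the image `φ(X)` is a Borel subset of `{0,1}^ℕ`. -/
theorem measurableSet_range_phi {X : Type*} [MetricSpace X] [CompleteSpace X]
    [TopologicalSpace.SeparableSpace X]
    (S : ℕ → Set X)
    (hbasis : TopologicalSpace.IsTopologicalBasis (Set.range S)) :
    MeasurableSet (Set.range (phi S)) := by
  borelize X
  haveI : PolishSpace X := inferInstance
  have hmeas : Measurable (phi S) := by
    refine measurable_pi_lambda _ fun k => ?_
    have : MeasurableSet (S k) := (hbasis.isOpen ⟨k, rfl⟩).measurableSet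
    refine measurable_to_countable fun y => ?_
    by_cases hy : y ∈ S k
    · convert this using 1
      ext x; simp [phi, hy]
    · convert this.compl using 1
      ext x; simp [phi, hy]
  have hinj : Function.Injective (phi S) := by
    intro x y hxy
    by_contra hne
    obtain ⟨U, ⟨k, rfl⟩, hxU, hUy⟩ := hbasis.exists_subset_of_mem_open
      (show x ∈ ({y}ᶜ : Set X) from hne) (isOpen_compl_singleton)
    have := congrFun hxy k
    simp only [phi, decide_eq_decide] at this
    exact hUy (this.mp hxU) rfl
  exact (hmeas.measurableEmbedding hinj).measurableSet_range

end ErgodicDecomposition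
end

section
/- Let X be a complete separable metric space with its Borel σ-algebra and (S_k)_{k∈ℕ} an enumeration of a countable basis for the topology of X. Define φ : X → {0,1}^ℕ by φ(x) = (χ_{S_k}(x))_{k∈ℕ}, where {0,1}^ℕ carries its Borel σ-algebra. Then φ is injective, Borel measurable, and maps Borel subsets of X to Borel subsets of {0,1}^ℕ; in particular φ is a measurable embedding of X into {0,1}^ℕ whose inverse φ⁻¹ : φ(X) → X is measurable. -/
open MeasureTheory Filter Set Topology

namespace ErgodicDecomposition

variable {X : Type*}

/-- `φ` is an injective Borel measurable map sending Borel sets to Borel sets,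
i.e. a measurable embedding of `X` into `{0,1}^ℕ` (so its inverse on `φ(X)` is measurable). -/
theorem phi_measurableEmbedding {X : Type*} [MetricSpace X] [CompleteSpace X]
    [TopologicalSpace.SeparableSpace X] [MeasurableSpace X] [BorelSpace X]
    (S : ℕ → Set X)
    (hbasis : TopologicalSpace.IsTopologicalBasis (Set.range S)) :
    Function.Injective (phi S) ∧ Measurable (phi S) ∧
    (∀ B : Set X, MeasurableSet B → MeasurableSet (phi S '' B)) ∧
    MeasurableEmbedding (phi S) := by
  have hopen : ∀ k, IsOpen (S k) := fun k => hbasis.isOpen ⟨k, rfl⟩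
  have hinj : Function.Injective (phi S) := by
    intro x y hxy
    by_contra hne
    obtain ⟨U, hUmem, hxU, hyU⟩ := t1Space_iff_exists_open.mp (inferInstance) hne
    obtain ⟨s, ⟨k, rfl⟩, hxs, hsU⟩ := hbasis.exists_subset_of_mem_open hxU hUmem
    have : phi S x k = phi S y k := congrFun hxy k
    simp only [phi, decide_eq_decide] at this
    exact hyU (hsU (this.mp hxs))
  have hmeas : Measurable (phi S) := by
    refine measurable_pi_lambda _ fun k => ?_
    refine measurable_to_countable' fun b => ?_
    have hm : MeasurableSet (S k) := (hopen k).measurableSet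
    cases b with
    | true =>
      have : (fun x => phi S x k) ⁻¹' {true} = S k := by
        ext x; simp [phi]
      rw [this]; exact hm
    | false =>
      have : (fun x => phi S x k) ⁻¹' {false} = (S k)ᶜ := by
        ext x; simp [phi]
      rw [this]; exact hm.compl
  haveI : PolishSpace X := by infer_instance
  have hemb : MeasurableEmbedding (phi S) := hmeas.measurableEmbedding hinj
  exact ⟨hinj, hmeas, fun B hB => hemb.measurableSet_image.mpr hB, hemb⟩

end ErgodicDecomposition
end
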